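/- arXiv:2409.14930 — 4 statements merged into one kernel-verified Lean document; each statement's English description precedes it below -/
import Mathlib

section
/- Let H be a complex Hilbert space and let T be a nonzero bounded linear operator on H with T² = 0. Then there exists a nonzero bounded linear operator V on H (the partial isometry from the polar decomposition of T) satisfying V V* V = V and V² = 0. -/
open scoped InnerProductSpace ComplexConjugate


/-- If `T` is a nonzero bounded operator on a complex Hilbert space with `T² = 0`,
then the partial isometry `V` from the polar decomposition of `T` is a nonzero
operator satisfying `V V* V = V` and `V² = 0`. -/
theorem stmt1 {H : Type*} [NormedAddCommGroup H] [InnerProductSpace ℂ H] [CompleteSpace H]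
    (T : H →L[ℂ] H) (hT : T ≠ 0) (hT2 : T * T = 0) :
    ∃ V : H →L[ℂ] H, V ≠ 0 ∧ V * star V * V = V ∧ V * V = 0 := by
  obtain ⟨x, hx⟩ : ∃ x, T x ≠ 0 := by
    by_contra h; push_neg at h
    exact hT (ContinuousLinearMap.ext fun y => by simp [h y])
  set w₀ := T x with hw₀def
  have hw₀ : w₀ ≠ 0 := hx
  set w : H := (‖w₀‖⁻¹ : ℂ) • w₀ with hwdef
  have hwn : ‖w‖ = 1 := by
    rw [hwdef]
    simp [norm_smul, norm_inv, inv_mul_cancel₀ (norm_ne_zero_iff.mpr hw₀)]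
  have hTw₀ : T w₀ = 0 := by
    have := congrArg (fun S : H →L[ℂ] H => S x) hT2
    simpa [hw₀def] using this
  have hTw : T w = 0 := by rw [hwdef, map_smul, hTw₀, smul_zero]
  set u₀ := (ContinuousLinearMap.adjoint T) w with hu₀def
  have hiuw : ⟪u₀, w⟫_ℂ = 0 := by
    rw [hu₀def, ContinuousLinearMap.adjoint_inner_left, hTw, inner_zero_right]
  have hu₀ : u₀ ≠ 0 := by
    intro h
    have h1 : ⟪u₀, x⟫_ℂ = 0 := by rw [h, inner_zero_left]
    rw [hu₀def, ContinuousLinearMap.adjoint_inner_left] at h1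
    rw [hwdef, inner_smul_left, ← hw₀def] at h1
    have h2 : ⟪w₀, w₀⟫_ℂ ≠ 0 := by
      simpa using (inner_self_ne_zero (𝕜 := ℂ)).mpr hw₀
    have h3 : (starRingEnd ℂ) ((‖w₀‖⁻¹ : ℂ)) ≠ 0 := by
      simp [norm_ne_zero_iff.mpr hw₀]
    exact (mul_ne_zero h3 h2) h1
  set u : H := (‖u₀‖⁻¹ : ℂ) • u₀ with hudef
  have hun : ‖u‖ = 1 := by
    rw [hudef]
    simp [norm_smul, norm_inv, inv_mul_cancel₀ (norm_ne_zero_iff.mpr hu₀)]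
  have hwne : w ≠ 0 := fun h => by simp [h] at hwn
  have huw : ⟪u, w⟫_ℂ = 0 := by
    rw [hudef, inner_smul_left, hiuw, mul_zero]
  have huu : ⟪u, u⟫_ℂ = 1 := by
    rw [inner_self_eq_norm_sq_to_K, hun]; norm_num
  have hww : ⟪w, w⟫_ℂ = 1 := by
    rw [inner_self_eq_norm_sq_to_K, hwn]; norm_num
  set V : H →L[ℂ] H := (innerSL ℂ u).smulRight w with hVdef
  have hVapp : ∀ y, V y = ⟪u, y⟫_ℂ • w := fun y => rfl
  have hVstar : star V = (innerSL ℂ w).smulRight u := by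
    rw [ContinuousLinearMap.star_eq_adjoint]
    symm
    rw [ContinuousLinearMap.eq_adjoint_iff]
    intro a b
    simp only [ContinuousLinearMap.smulRight_apply, innerSL_apply_apply, inner_smul_left,
      inner_smul_right, hVapp]
    rw [← inner_conj_symm a w]
    ring
  refine ⟨V, ?_, ?_, ?_⟩
  · intro h
    have : V u = 0 := by rw [h]; rfl
    rw [hVapp, huu, one_smul] at this
    exact hwne this
  · ext y
    simp only [ContinuousLinearMap.mul_apply, hVstar, ContinuousLinearMap.smulRight_apply,
      innerSL_apply_apply, hVapp, inner_smul_right, hww, huu, smul_smul]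
    ring_nf
  · ext y
    simp only [ContinuousLinearMap.mul_apply, ContinuousLinearMap.zero_apply, hVapp,
      inner_smul_right, huw, mul_zero, zero_smul]
end

section
/- Let A be a unital C*-algebra and let V ∈ A be a partial isometry (V V* V = V) with V² = 0. Set Z := V*V + V V*, A₁ := (V + V*) + Z − 1 and A₂ := i(V* − V) + Z − 1. Then A₁ and A₂ are self-adjoint, A₁² = A₂² = 1, and the commutator identity A₁A₂ − A₂A₁ = (V + V*)·i(V* − V) − i(V* − V)·(V + V*) holds; in particular, if V ≠ 0 then ‖A₁A₂ − A₂A₁‖ = 2. -/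
/-- For a partial isometry `V` in a unital C*-algebra with `V² = 0`, setting
`Z = V*V + V V*`, `A₁ = (V + V*) + Z − 1` and `A₂ = i(V* − V) + Z − 1`, the
elements `A₁, A₂` are self-adjoint, square to `1`, their commutator equals the
commutator of `V + V*` and `i(V* − V)`, and if `V ≠ 0` its norm is `2`. -/
theorem stmt6 {A : Type*} [CStarAlgebra A] (V : A)
    (hpi : V * star V * V = V) (hV2 : V * V = 0) :
    letI Z : A := star V * V + V * star V
    letI A₁ : A := (V + star V) + Z - 1
    letI A₂ : A := Complex.I • (star V - V) + Z - 1
    star A₁ = A₁ ∧ star A₂ = A₂ ∧ A₁ * A₁ = 1 ∧ A₂ * A₂ = 1 ∧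
    A₁ * A₂ - A₂ * A₁ =
      (V + star V) * (Complex.I • (star V - V)) -
        (Complex.I • (star V - V)) * (V + star V) ∧
    (V ≠ 0 → ‖A₁ * A₂ - A₂ * A₁‖ = 2) := by
  have hV2' : star V * star V = 0 := by
    have := congrArg star hV2; simpa using this
  have hpi' : star V * V * star V = star V := by
    have := congrArg star hpi; simpa [mul_assoc] using this
  have h1 : ∀ x : A, V * (V * x) = 0 := by intro x; rw [← mul_assoc, hV2, zero_mul]
  have h2 : ∀ x : A, star V * (star V * x) = 0 := by intro x; rw [← mul_assoc, hV2', zero_mul]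
  have h3 : ∀ x : A, V * (star V * (V * x)) = V * x := by
    intro x; rw [← mul_assoc, ← mul_assoc, hpi]
  have h4 : ∀ x : A, star V * (V * (star V * x)) = star V * x := by
    intro x; rw [← mul_assoc, ← mul_assoc, hpi']
  have hpir : V * (star V * V) = V := by rw [← mul_assoc, hpi]
  have hpir' : star V * (V * star V) = star V := by rw [← mul_assoc, hpi']
  refine ⟨?_, ?_, ?_, ?_, ?_, ?_⟩
  · simp [star_sub, star_add, star_smul]; abel
  · simp [star_sub, star_add, star_smul, Complex.conj_I, sub_smul, neg_smul, smul_sub]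
    abel
  · simp only [mul_add, add_mul, sub_mul, mul_sub, one_mul, mul_one, mul_assoc,
      hV2, hV2', h1, h2, h3, h4, hpir, hpir', zero_mul, mul_zero]
    abel
  · simp only [mul_add, add_mul, sub_mul, mul_sub, one_mul, mul_one, smul_mul_assoc,
      mul_smul_comm, smul_sub, smul_smul, Complex.I_mul_I, smul_add, neg_smul, one_smul,
      mul_assoc, hV2, hV2', h1, h2, h3, h4, hpir, hpir', zero_mul, mul_zero, smul_zero]
    abel
  · simp only [mul_add, add_mul, sub_mul, mul_sub, one_mul, mul_one, smul_mul_assoc,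
      mul_smul_comm, smul_sub, smul_smul, Complex.I_mul_I, smul_add, neg_smul, one_smul,
      mul_assoc, hV2, hV2', h1, h2, h3, h4, hpir, hpir', zero_mul, mul_zero, smul_zero]
    abel
  · intro hVne
    set D : A := V * star V - star V * V with hD
    have hcomm : ((V + star V) + (star V * V + V * star V) - 1) *
        (Complex.I • (star V - V) + (star V * V + V * star V) - 1) -
        (Complex.I • (star V - V) + (star V * V + V * star V) - 1) *
        ((V + star V) + (star V * V + V * star V) - 1) = (2 : ℝ) • Complex.I • D := by
      simp only [hD, mul_add, add_mul, sub_mul, mul_sub, one_mul, mul_one, smul_mul_assoc,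
        mul_smul_comm, smul_sub, smul_smul, Complex.I_mul_I, smul_add, neg_smul, one_smul,
        mul_assoc, hV2, hV2', h1, h2, h3, h4, hpir, hpir', zero_mul, mul_zero, smul_zero]
      module
    rw [hcomm, norm_smul, norm_smul, Complex.norm_I, one_mul]
    have hDstar : star D = D := by simp [hD]
    have hDsq : D * D = star V * V + V * star V := by
      simp only [hD, mul_add, add_mul, sub_mul, mul_sub, mul_assoc,
        hV2, hV2', h1, h2, h3, h4, hpir, hpir', zero_mul, mul_zero]
      abel
    set Z : A := star V * V + V * star V with hZ
    have hZstar : star Z = Z := by simp [hZ]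
    have hZsq : Z * Z = Z := by
      simp only [hZ, mul_add, add_mul, mul_assoc,
        hV2, hV2', h1, h2, h3, h4, hpir, hpir', zero_mul, mul_zero]
      abel
    have hZne : Z ≠ 0 := by
      intro h
      apply hVne
      have : V * Z = V := by
        simp only [hZ, mul_add, mul_assoc, hpir, h1, add_zero]
      rw [h, mul_zero] at this
      exact this.symm
    have hZnorm : ‖Z‖ = 1 := by
      have h1' : ‖Z‖ * ‖Z‖ = ‖Z‖ := by
        rw [← CStarRing.norm_star_mul_self, hZstar, hZsq]
      have h0 : ‖Z‖ ≠ 0 := norm_ne_zero_iff.mpr hZne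
      exact mul_left_cancel₀ h0 (by rw [h1', mul_one])
    have hDnorm : ‖D‖ = 1 := by
      have : ‖D‖ * ‖D‖ = 1 := by
        rw [← CStarRing.norm_star_mul_self, hDstar, hDsq, hZnorm]
      nlinarith [norm_nonneg D]
    rw [hDnorm, mul_one]
    norm_num
end

section
/- Let A be a unital C*-algebra and let A₁, A₂, B₁, B₂ ∈ A be self-adjoint elements with Aᵢ Bⱼ = Bⱼ Aᵢ for all i, j ∈ {1,2} and A₁² = A₂² = B₁² = B₂² = 1. Then the Bell operator C := A₁B₁ + A₁B₂ + A₂B₁ − A₂B₂ satisfies ‖C‖ ≤ 2√2. -/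
/-- Cirel'son bound: in a unital C*-algebra, for self-adjoint involutions
`A₁, A₂, B₁, B₂` with each `Aᵢ` commuting with each `Bⱼ`, the Bell operator
has norm at most `2√2`. -/
theorem stmt11 {A : Type*} [CStarAlgebra A] (A₁ A₂ B₁ B₂ : A)
    (hA₁ : star A₁ = A₁) (hA₂ : star A₂ = A₂) (hB₁ : star B₁ = B₁) (hB₂ : star B₂ = B₂)
    (hc : ∀ a ∈ ({A₁, A₂} : Set A), ∀ b ∈ ({B₁, B₂} : Set A), a * b = b * a)
    (hA₁2 : A₁ * A₁ = 1) (hA₂2 : A₂ * A₂ = 1) (hB₁2 : B₁ * B₁ = 1) (hB₂2 : B₂ * B₂ = 1) :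
    ‖A₁ * B₁ + A₁ * B₂ + A₂ * B₁ - A₂ * B₂‖ ≤ 2 * Real.sqrt 2 := by
  rcases subsingleton_or_nontrivial A with hTriv | hNT
  · have : A₁ * B₁ + A₁ * B₂ + A₂ * B₁ - A₂ * B₂ = 0 := Subsingleton.elim _ _
    rw [this, norm_zero]
    positivity
  have h11 := hc A₁ (by simp) B₁ (by simp)
  have h12 := hc A₁ (by simp) B₂ (by simp)
  have h21 := hc A₂ (by simp) B₁ (by simp)
  have h22 := hc A₂ (by simp) B₂ (by simp)
  -- move-B-right lemmas
  have m11 : ∀ x : A, B₁ * (A₁ * x) = A₁ * (B₁ * x) := fun x => by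
    rw [← mul_assoc, ← h11, mul_assoc]
  have m12 : ∀ x : A, B₂ * (A₁ * x) = A₁ * (B₂ * x) := fun x => by
    rw [← mul_assoc, ← h12, mul_assoc]
  have m21 : ∀ x : A, B₁ * (A₂ * x) = A₂ * (B₁ * x) := fun x => by
    rw [← mul_assoc, ← h21, mul_assoc]
  have m22 : ∀ x : A, B₂ * (A₂ * x) = A₂ * (B₂ * x) := fun x => by
    rw [← mul_assoc, ← h22, mul_assoc]
  have sA₁ : ∀ x : A, A₁ * (A₁ * x) = x := fun x => by rw [← mul_assoc, hA₁2, one_mul]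
  have sA₂ : ∀ x : A, A₂ * (A₂ * x) = x := fun x => by rw [← mul_assoc, hA₂2, one_mul]
  have sB₁ : ∀ x : A, B₁ * (B₁ * x) = x := fun x => by rw [← mul_assoc, hB₁2, one_mul]
  have sB₂ : ∀ x : A, B₂ * (B₂ * x) = x := fun x => by rw [← mul_assoc, hB₂2, one_mul]
  set C := A₁ * B₁ + A₁ * B₂ + A₂ * B₁ - A₂ * B₂ with hC
  have hsa : star C = C := by
    simp only [hC, star_sub, star_add, star_mul, hA₁, hA₂, hB₁, hB₂, ← h11, ← h12, ← h21, ← h22]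
  have key : C * C = (4 : A) + (A₁*A₂ - A₂*A₁) * (B₂*B₁ - B₁*B₂) := by
    have h4 : (4 : A) = 1 + 1 + 1 + 1 := by norm_num
    simp only [hC, h4, mul_add, add_mul, mul_sub, sub_mul, mul_assoc, m11, m12, m21, m22,
      sA₁, sA₂, sB₁, sB₂, hA₁2, hA₂2, hB₁2, hB₂2, mul_one, one_mul]
    abel
  -- norms of the generators
  have nA₁ : ‖A₁‖ = 1 := by
    have := CStarRing.norm_star_mul_self (x := A₁)
    rw [hA₁, hA₁2, norm_one] at this
    nlinarith [norm_nonneg A₁]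
  have nA₂ : ‖A₂‖ = 1 := by
    have := CStarRing.norm_star_mul_self (x := A₂)
    rw [hA₂, hA₂2, norm_one] at this
    nlinarith [norm_nonneg A₂]
  have nB₁ : ‖B₁‖ = 1 := by
    have := CStarRing.norm_star_mul_self (x := B₁)
    rw [hB₁, hB₁2, norm_one] at this
    nlinarith [norm_nonneg B₁]
  have nB₂ : ‖B₂‖ = 1 := by
    have := CStarRing.norm_star_mul_self (x := B₂)
    rw [hB₂, hB₂2, norm_one] at this
    nlinarith [norm_nonneg B₂]
  have nDa : ‖A₁*A₂ - A₂*A₁‖ ≤ 2 := by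
    calc ‖A₁*A₂ - A₂*A₁‖ ≤ ‖A₁*A₂‖ + ‖A₂*A₁‖ := norm_sub_le _ _
      _ ≤ ‖A₁‖*‖A₂‖ + ‖A₂‖*‖A₁‖ := add_le_add (norm_mul_le _ _) (norm_mul_le _ _)
      _ = 2 := by rw [nA₁, nA₂]; ring
  have nDb : ‖B₂*B₁ - B₁*B₂‖ ≤ 2 := by
    calc ‖B₂*B₁ - B₁*B₂‖ ≤ ‖B₂*B₁‖ + ‖B₁*B₂‖ := norm_sub_le _ _
      _ ≤ ‖B₂‖*‖B₁‖ + ‖B₁‖*‖B₂‖ := add_le_add (norm_mul_le _ _) (norm_mul_le _ _)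
      _ = 2 := by rw [nB₁, nB₂]; ring
  have n4 : ‖(4 : A)‖ ≤ 4 := by
    have : ((4:ℕ) : A) = (4 : A) := by norm_num
    calc ‖(4:A)‖ = ‖((4:ℕ):A)‖ := by rw [this]
      _ ≤ (4:ℕ) * ‖(1:A)‖ := Nat.norm_cast_le 4
      _ = 4 := by rw [norm_one]; norm_num
  have hCC : ‖C * C‖ ≤ 8 := by
    rw [key]
    calc ‖(4:A) + (A₁*A₂ - A₂*A₁) * (B₂*B₁ - B₁*B₂)‖
        ≤ ‖(4:A)‖ + ‖(A₁*A₂ - A₂*A₁) * (B₂*B₁ - B₁*B₂)‖ := norm_add_le _ _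
      _ ≤ 4 + ‖A₁*A₂ - A₂*A₁‖ * ‖B₂*B₁ - B₁*B₂‖ := add_le_add n4 (norm_mul_le _ _)
      _ ≤ 4 + 2 * 2 := by
          have := mul_le_mul nDa nDb (norm_nonneg _) (by norm_num : (0:ℝ) ≤ 2)
          linarith
      _ = 8 := by norm_num
  have hsq : ‖C‖ * ‖C‖ ≤ 8 := by
    have := CStarRing.norm_star_mul_self (x := C)
    rw [hsa] at this
    rw [← this]; exact hCC
  have h2 : Real.sqrt 2 * Real.sqrt 2 = 2 := Real.mul_self_sqrt (by norm_num)
  nlinarith [norm_nonneg C, Real.sqrt_nonneg 2, hsq, h2]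
end

section
/- Let A be a unital C*-algebra, let ω : A → ℂ be a state (a linear functional with ω(a*a) real and nonnegative for all a ∈ A and ω(1) = 1), and let A₁, A₂, B₁, B₂ ∈ A be self-adjoint with Aᵢ Bⱼ = Bⱼ Aᵢ for all i, j ∈ {1,2} and A₁² = A₂² = B₁² = B₂² = 1. Then the CHSH correlation satisfies |ω(A₁B₁) + ω(A₁B₂) + ω(A₂B₁) − ω(A₂B₂)| ≤ 2√2. -/
/-!
With `s = √2`, the commutation relations and `Aᵢ² = Bⱼ² = 1` give the sum-of-squares identity
`(s A₁ - (B₁ + B₂))² + (s A₂ - (B₁ - B₂))² = 2s (2s - C)` for the CHSH operator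
`C = A₁B₁ + A₁B₂ + A₂B₁ - A₂B₂`. The squares are squares of self-adjoint elements, so a positive
functional is nonnegative on them, whence `ω C ≤ 2√2 ω 1`; in particular `ω C` is real.
Replacing `Aᵢ` by `-Aᵢ` flips the sign of `C` and gives the lower bound.
-/

open ComplexOrder

section

variable {R : Type*} [Ring R]

def chshOperator (A₁ A₂ B₁ B₂ : R) : R :=
  A₁ * B₁ + A₁ * B₂ + A₂ * B₁ - A₂ * B₂

variable {A₁ A₂ B₁ B₂ : R}

theorem chshOperator_neg_left :
    chshOperator (-A₁) (-A₂) B₁ B₂ = -chshOperator A₁ A₂ B₁ B₂ := by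
  simp only [chshOperator, neg_mul]
  abel

theorem chshOperator_sum_sq {𝕜 : Type*} [CommRing 𝕜] [Algebra 𝕜 R] (s : 𝕜) (hs : s * s = 2)
    (h₁₁ : Commute A₁ B₁) (h₁₂ : Commute A₁ B₂) (h₂₁ : Commute A₂ B₁) (h₂₂ : Commute A₂ B₂)
    (hA₁ : A₁ * A₁ = 1) (hA₂ : A₂ * A₂ = 1) (hB₁ : B₁ * B₁ = 1) (hB₂ : B₂ * B₂ = 1) :
    (s • A₁ - (B₁ + B₂)) * (s • A₁ - (B₁ + B₂)) + (s • A₂ - (B₁ - B₂)) * (s • A₂ - (B₁ - B₂))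
      = (2 * s) • ((2 * s) • 1 - chshOperator A₁ A₂ B₁ B₂) := by
  simp only [chshOperator, mul_add, add_mul, mul_sub, sub_mul, smul_mul_assoc, mul_smul_comm,
    smul_smul, hs, hA₁, hA₂, hB₁, hB₂, h₁₁.eq, h₁₂.eq, h₂₁.eq, h₂₂.eq, smul_sub, smul_add]
  linear_combination (norm := module) (-4 : 𝕜) • hs • (1 : R)

end

theorem Complex.norm_le_of_le_of_neg_le {w : ℂ} {r : ℝ} (h : w ≤ r) (h' : -w ≤ r) : ‖w‖ ≤ r := by
  have hw : w = w.re :=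
    Complex.eq_re_of_ofReal_le (r := -r) (by rw [Complex.ofReal_neg]; exact neg_le.1 h')
  rw [hw, ← Complex.ofReal_neg, Complex.real_le_real] at h'
  rw [hw, Complex.real_le_real] at h
  rw [hw, Complex.norm_real, Real.norm_eq_abs, abs_le]
  constructor <;> linarith

theorem map_chshOperator_le {R : Type*} [Ring R] [StarRing R] [Algebra ℂ R] [StarModule ℂ R]
    (ω : R →ₗ[ℂ] ℂ) (hω : ∀ a : R, 0 ≤ ω (star a * a)) {A₁ A₂ B₁ B₂ : R}
    (hA₁ : IsSelfAdjoint A₁) (hA₂ : IsSelfAdjoint A₂)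
    (hB₁ : IsSelfAdjoint B₁) (hB₂ : IsSelfAdjoint B₂)
    (h₁₁ : Commute A₁ B₁) (h₁₂ : Commute A₁ B₂) (h₂₁ : Commute A₂ B₁) (h₂₂ : Commute A₂ B₂)
    (hA₁' : A₁ * A₁ = 1) (hA₂' : A₂ * A₂ = 1) (hB₁' : B₁ * B₁ = 1) (hB₂' : B₂ * B₂ = 1) :
    ω (chshOperator A₁ A₂ B₁ B₂) ≤ ((2 * √2 : ℝ) : ℂ) * ω 1 := by
  set s : ℂ := ((√2 : ℝ) : ℂ)
  have hs : s * s = 2 := by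
    rw [← Complex.ofReal_mul, Real.mul_self_sqrt zero_le_two, Complex.ofReal_ofNat]
  have hs_nonneg : 0 ≤ s := Complex.zero_le_real.2 (Real.sqrt_nonneg 2)
  have hs_sa : IsSelfAdjoint s := Complex.conj_ofReal _
  have hω_sq {P : R} (hP : IsSelfAdjoint P) : 0 ≤ ω (P * P) :=
    (hω P).trans_eq (by rw [hP.star_eq])
  have hsum := congrArg ω (chshOperator_sum_sq s hs h₁₁ h₁₂ h₂₁ h₂₂ hA₁' hA₂' hB₁' hB₂')
  rw [map_add, map_smul, map_sub, map_smul, smul_eq_mul, smul_eq_mul] at hsum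
  have hnonneg : 0 ≤ 2 * s * (2 * s * ω 1 - ω (chshOperator A₁ A₂ B₁ B₂)) :=
    hsum ▸ add_nonneg (hω_sq ((hs_sa.smul hA₁).sub (hB₁.add hB₂)))
      (hω_sq ((hs_sa.smul hA₂).sub (hB₁.sub hB₂)))
  have hdiv : 2 * s * ω 1 - ω (chshOperator A₁ A₂ B₁ B₂)
      = s / 4 * (2 * s * (2 * s * ω 1 - ω (chshOperator A₁ A₂ B₁ B₂))) := by
    linear_combination (ω (chshOperator A₁ A₂ B₁ B₂) / 2 - s * ω 1) * hs
  rw [Complex.ofReal_mul, Complex.ofReal_ofNat, ← sub_nonneg, hdiv]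
  exact mul_nonneg (div_nonneg hs_nonneg zero_le_four) hnonneg

open ComplexOrder in
/-- CHSH inequality for states: under the Cirel'son hypotheses, any state `ω`
(a positive normalized linear functional) satisfies the CHSH bound `2√2`. -/
theorem stmt13 {A : Type*} [CStarAlgebra A] (ω : A →ₗ[ℂ] ℂ)
    (hpos : ∀ a : A, 0 ≤ ω (star a * a)) (hnorm : ω 1 = 1)
    (A₁ A₂ B₁ B₂ : A)
    (hA₁ : star A₁ = A₁) (hA₂ : star A₂ = A₂) (hB₁ : star B₁ = B₁) (hB₂ : star B₂ = B₂)
    (hc : ∀ a ∈ ({A₁, A₂} : Set A), ∀ b ∈ ({B₁, B₂} : Set A), a * b = b * a)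
    (hA₁2 : A₁ * A₁ = 1) (hA₂2 : A₂ * A₂ = 1) (hB₁2 : B₁ * B₁ = 1) (hB₂2 : B₂ * B₂ = 1) :
    ‖ω (A₁ * B₁) + ω (A₁ * B₂) + ω (A₂ * B₁) - ω (A₂ * B₂)‖ ≤ 2 * Real.sqrt 2 := by
  have h₁₁ : Commute A₁ B₁ := hc A₁ (by simp) B₁ (by simp)
  have h₁₂ : Commute A₁ B₂ := hc A₁ (by simp) B₂ (by simp)
  have h₂₁ : Commute A₂ B₁ := hc A₂ (by simp) B₁ (by simp)
  have h₂₂ : Commute A₂ B₂ := hc A₂ (by simp) B₂ (by simp)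
  have hle := map_chshOperator_le ω hpos hA₁ hA₂ hB₁ hB₂ h₁₁ h₁₂ h₂₁ h₂₂ hA₁2 hA₂2 hB₁2 hB₂2
  have hge := map_chshOperator_le ω hpos (IsSelfAdjoint.neg hA₁) (IsSelfAdjoint.neg hA₂) hB₁ hB₂
    h₁₁.neg_left h₁₂.neg_left h₂₁.neg_left h₂₂.neg_left
    (by rw [neg_mul_neg, hA₁2]) (by rw [neg_mul_neg, hA₂2]) hB₁2 hB₂2
  rw [chshOperator_neg_left, map_neg] at hge
  rw [hnorm, mul_one] at hle hge
  simpa [chshOperator] using Complex.norm_le_of_le_of_neg_le hle hge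
end
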